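/- Identify ℝ³ with {z ∈ ℂ³ : Im z₁ = Im z₂ = Im z₃ = 0} and let R = {z ∈ ℂ³ : Im z = 0 and (Re z₃)((Re z₁)² + (Re z₂)²)((Re z₁) + (Re z₂)) = (Re z₁)⁴}. Then there is no pair (U, X) where U ⊆ ℂ³ is an open set containing R and X is a complex analytic subset of U such that for every point p ∈ R the germ X_p is the smallest complex analytic germ containing the germ R_p (i.e. R_p ⊆ X_p and X_p ⊆ Y_p for every complex analytic subset Y of any open neighborhood of p with R_p ⊆ Y_p). -/

import Mathlib

open scoped ENNReal

noncomputable section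

/-- Germ inclusion `R_p ⊆ Q_p`: `R ∩ V ⊆ Q` for some open neighbourhood `V` of `p`. -/
def GermLE {E : Type*} [TopologicalSpace E] (R Q : Set E) (p : E) : Prop :=
  ∃ V : Set E, IsOpen V ∧ p ∈ V ∧ R ∩ V ⊆ Q

/-- `R` is a real analytic subset of the open set `Ω`. -/
def IsRealAnalyticSubset {E : Type*} [NormedAddCommGroup E] [NormedSpace ℝ E]
    (Ω R : Set E) : Prop :=
  R ⊆ Ω ∧ ∀ p ∈ Ω, ∃ U : Set E, IsOpen U ∧ p ∈ U ∧ U ⊆ Ω ∧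
    ∃ (k : ℕ) (φ : Fin k → E → ℝ),
      (∀ i, AnalyticOnNhd ℝ (φ i) U) ∧ R ∩ U = {x ∈ U | ∀ i, φ i x = 0}

/-- `X` is a complex analytic subset of the open set `W`. -/
def IsComplexAnalyticSubset {E : Type*} [NormedAddCommGroup E] [NormedSpace ℂ E]
    (W X : Set E) : Prop :=
  X ⊆ W ∧ ∀ p ∈ W, ∃ U : Set E, IsOpen U ∧ p ∈ U ∧ U ⊆ W ∧
    ∃ (k : ℕ) (φ : Fin k → E → ℂ),
      (∀ i, AnalyticOnNhd ℂ (φ i) U) ∧ X ∩ U = {x ∈ U | ∀ i, φ i x = 0}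

/-- The local (Hausdorff) dimension of `R` at `p`. -/
def locDim {E : Type*} [EMetricSpace E] (R : Set E) (p : E) : ℝ≥0∞ :=
  ⨅ (U : Set E) (_ : IsOpen U) (_ : p ∈ U), dimH (R ∩ U)

/-- `X` represents the smallest complex analytic germ at `p` containing the germ of `R`. -/
def IsSmallestComplexGermAt {E : Type*} [NormedAddCommGroup E] [NormedSpace ℂ E]
    (R : Set E) (p : E) (X : Set E) : Prop :=
  (∃ U : Set E, IsOpen U ∧ p ∈ U ∧ IsComplexAnalyticSubset U X) ∧
  GermLE R X p ∧
  ∀ (U' Y : Set E), IsOpen U' → p ∈ U' → IsComplexAnalyticSubset U' Y →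
    GermLE R Y p → GermLE X Y p

/-- `S` is closed and nowhere dense in `R` (with its subspace topology). -/
def ClosedNowhereDenseIn {E : Type*} [TopologicalSpace E] (R S : Set E) : Prop :=
  S ⊆ R ∧ IsClosed {x : R | (x : E) ∈ S} ∧ interior {x : R | (x : E) ∈ S} = ∅

/-- The set `{x₃(x₁² + x₂²)(x₁ + x₂) = x₁⁴} ⊆ ℝ³ ⊆ ℂ³`. -/
def cartanSet3C : Set (Fin 3 → ℂ) :=
  {z | (∀ j, (z j).im = 0) ∧
    (z 2).re * ((z 0).re ^ 2 + (z 1).re ^ 2) * ((z 0).re + (z 1).re) = (z 0).re ^ 4}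

/-!
Near the origin `X` contains the real points of `R`. These are dense enough in the
complexification `z₃ (z₁² + z₂²)(z₁ + z₂) = z₁⁴`, parametrized by
`(w, v) ↦ (w, w v, w / ((1 + v²)(1 + v)))`, for the identity theorem, applied in `w` and then in
`v`, to put into `X` the image of a polydisc whose `v`-disc reaches `i s` for `s < 1`. With
`w = t (1 - s²)(1 + i s)` this gives points of `X` with `z₃ = t` that converge to `(0, 0, t)` as
`s → 1`. Near `(0, 0, t)`, however, `R` lies on the single branch `z₁ + z₂ = z₁ σ(z₁ / z₃)`,
`σ` the local inverse at `0` of `s ↦ s (s² - 2s + 2)`. This branch is a complex analytic set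
containing the germ of `R` at `(0, 0, t)` but none of the points above (there `z₂ / z₁` is purely
imaginary while `σ` is small), contradicting the minimality of `X` at `(0, 0, t)`.
-/

open Filter Topology Metric Set Complex

section IdentityTheorem

variable {E : Type*} [NormedAddCommGroup E] [NormedSpace ℂ E]

theorem AnalyticOnNhd.eqOn_zero_of_forall_ofReal {g : ℂ → E} {S : Set ℂ}
    (hg : AnalyticOnNhd ℂ g S) (hSo : IsOpen S) (hS : IsPreconnected S) {a : ℝ}
    (ha : (a : ℂ) ∈ S) (h : ∀ x : ℝ, (x : ℂ) ∈ S → g x = 0) : EqOn g 0 S := by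
  refine hg.eqOn_zero_of_preconnected_of_frequently_eq_zero hS ha ?_
  have hreal : Tendsto ((↑) : ℝ → ℂ) (𝓝[≠] a) (𝓝[≠] (a : ℂ)) :=
    continuous_ofReal.continuousWithinAt.tendsto_nhdsWithin fun _ hx ↦ by simpa using hx
  have hS_near : ∀ᶠ x : ℝ in 𝓝 a, (x : ℂ) ∈ S :=
    continuous_ofReal.continuousAt.preimage_mem_nhds (hSo.mem_nhds ha)
  exact hreal.frequently <| Eventually.frequently <|
    Eventually.filter_mono nhdsWithin_le_nhds (hS_near.mono h)

theorem eq_zero_of_forall_ofReal₂ {F : ℂ → ℂ → E} {S T : Set ℂ} (hSo : IsOpen S)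
    (hS : IsPreconnected S) (hTo : IsOpen T) (hT : IsPreconnected T) {a b : ℝ}
    (ha : (a : ℂ) ∈ S) (hb : (b : ℂ) ∈ T) (hF₁ : ∀ v ∈ T, AnalyticOnNhd ℂ (F · v) S)
    (hF₂ : ∀ w ∈ S, AnalyticOnNhd ℂ (F w) T)
    (h : ∀ x u : ℝ, (x : ℂ) ∈ S → (u : ℂ) ∈ T → F x u = 0)
    {w v : ℂ} (hw : w ∈ S) (hv : v ∈ T) : F w v = 0 := by
  have hw_real : ∀ u : ℝ, (u : ℂ) ∈ T → F w u = 0 := fun u hu ↦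
    (hF₁ u hu).eqOn_zero_of_forall_ofReal hSo hS ha (fun x hx ↦ h x u hx hu) hw
  exact (hF₂ w hw).eqOn_zero_of_forall_ofReal hTo hT hb hw_real hv

theorem mem_of_forall_ofReal_mem {X U : Set E} {k : ℕ} {φ : Fin k → E → ℂ}
    (hφ : ∀ i, AnalyticOnNhd ℂ (φ i) U) (hX : X ∩ U = {x ∈ U | ∀ i, φ i x = 0})
    {Φ : ℂ → ℂ → E} {S T : Set ℂ} (hSo : IsOpen S) (hS : IsPreconnected S) (hTo : IsOpen T)
    (hT : IsPreconnected T) {a b : ℝ} (ha : (a : ℂ) ∈ S) (hb : (b : ℂ) ∈ T)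
    (hΦ₁ : ∀ v ∈ T, AnalyticOnNhd ℂ (Φ · v) S) (hΦ₂ : ∀ w ∈ S, AnalyticOnNhd ℂ (Φ w) T)
    (hΦU : ∀ w ∈ S, ∀ v ∈ T, Φ w v ∈ U)
    (h : ∀ x u : ℝ, (x : ℂ) ∈ S → (u : ℂ) ∈ T → Φ x u ∈ X)
    {w v : ℂ} (hw : w ∈ S) (hv : v ∈ T) : Φ w v ∈ X := by
  have hmem : ∀ w ∈ S, ∀ v ∈ T, Φ w v ∈ X ↔ ∀ i, φ i (Φ w v) = 0 := fun w hw v hv ↦ by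
    simpa [hΦU w hw v hv] using Set.ext_iff.1 hX (Φ w v)
  refine (hmem w hw v hv).2 fun i ↦ eq_zero_of_forall_ofReal₂ (F := fun w v ↦ φ i (Φ w v))
    hSo hS hTo hT ha hb (fun v hv ↦ (hφ i).comp (hΦ₁ v hv) fun w hw ↦ hΦU w hw v hv)
    (fun w hw ↦ (hφ i).comp (hΦ₂ w hw) fun v hv ↦ hΦU w hw v hv)
    (fun x u hx hu ↦ (hmem x hx u hu).1 (h x u hx hu) i) hw hv

theorem isComplexAnalyticSubset_zeroLocus {W : Set E} {g : E → ℂ} (hW : IsOpen W)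
    (hg : AnalyticOnNhd ℂ g W) : IsComplexAnalyticSubset W {x ∈ W | g x = 0} := by
  refine ⟨fun x hx ↦ hx.1, fun p hp ↦ ⟨W, hW, hp, subset_rfl, 1, fun _ ↦ g, fun _ ↦ hg, ?_⟩⟩
  ext x
  simp [and_comm]

end IdentityTheorem

theorem AnalyticAt.exists_eventually_rightInverse {𝕜 : Type*} [NontriviallyNormedField 𝕜]
    [CompleteSpace 𝕜] [CharZero 𝕜] {f : 𝕜 → 𝕜} {a : 𝕜} (hf : AnalyticAt 𝕜 f a)
    (hf' : deriv f a ≠ 0) {s : Set 𝕜} (hs : s ∈ 𝓝 a) :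
    ∃ g : 𝕜 → 𝕜, ∀ᶠ y in 𝓝 (f a), AnalyticAt 𝕜 g y ∧ f (g y) = y ∧ g y ∈ s :=
  ⟨_, (hf.analyticAt_localInverse hf').eventually_analyticAt.and <|
    (HasStrictDerivAt.eventually_right_inverse ..).and <|
      HasStrictFDerivAt.localInverse_tendsto _ hs⟩

/-- Substituting `z₂ = v z₁` into `z₃ (z₁² + z₂²)(z₁ + z₂) = z₁⁴` and solving for `z₃`. -/
def cartanParam (w v : ℂ) : Fin 3 → ℂ := ![w, w * v, w / ((1 + v ^ 2) * (1 + v))]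

theorem cartanParam_ofReal_mem {x u : ℝ} (hu : -1 < u) : cartanParam x u ∈ cartanSet3C := by
  have hu' : 0 < 1 + u := by linarith
  have hreal :
      cartanParam x u = fun j ↦ ((![x, x * u, x / ((1 + u ^ 2) * (1 + u))] j : ℝ) : ℂ) := by
    ext1 j
    fin_cases j <;> simp [cartanParam]
  rw [hreal]
  refine ⟨fun j ↦ ofReal_im _, ?_⟩
  simp only [ofReal_re, Matrix.cons_val]
  field_simp

theorem analyticAt_cartanParam_left (v w : ℂ) :
    AnalyticAt ℂ (cartanParam · v) w := by
  rw [analyticAt_pi_iff]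
  intro i
  fin_cases i <;> simp [cartanParam] <;> fun_prop

theorem analyticAt_cartanParam_right (w : ℂ) {v : ℂ} (hv : (1 + v ^ 2) * (1 + v) ≠ 0) :
    AnalyticAt ℂ (cartanParam w) v := by
  rw [analyticAt_pi_iff]
  intro i
  fin_cases i <;> simp [cartanParam] <;> fun_prop (disch := assumption)

/-- A disc around `0` that stays away from the poles `±i` and `-1` of `cartanParam`. -/
def paramDisc (ρ : ℝ) : Set ℂ := ball 0 ρ ∩ {v | -(1 / 2) < v.re}

theorem isOpen_paramDisc (ρ : ℝ) : IsOpen (paramDisc ρ) :=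
  isOpen_ball.inter (isOpen_lt continuous_const continuous_re)

theorem convex_paramDisc (ρ : ℝ) : Convex ℝ (paramDisc ρ) :=
  (convex_ball 0 ρ).inter (convex_halfSpace_re_gt _)

theorem lt_norm_denom_of_mem_paramDisc {ρ : ℝ} (hρ : ρ ≤ 1) {v : ℂ} (hv : v ∈ paramDisc ρ) :
    (1 - ρ) / 2 < ‖(1 + v ^ 2) * (1 + v)‖ := by
  obtain ⟨hvρ, hvre : -(1 / 2) < v.re⟩ := hv
  rw [mem_ball_zero_iff] at hvρ
  have hsq : 1 - ρ < ‖1 + v ^ 2‖ := by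
    have := norm_sub_norm_le (1 : ℂ) (-v ^ 2)
    rw [sub_neg_eq_add, norm_neg, norm_pow, norm_one] at this
    nlinarith [norm_nonneg v]
  have hlin : 1 / 2 < ‖1 + v‖ := by
    calc (1 : ℝ) / 2 < (1 + v).re := by simp; linarith
      _ ≤ ‖1 + v‖ := re_le_norm _
  rw [norm_mul]
  nlinarith [norm_nonneg v]

theorem denom_ne_zero_of_mem_paramDisc {ρ : ℝ} (hρ : ρ ≤ 1) {v : ℂ} (hv : v ∈ paramDisc ρ) :
    (1 + v ^ 2) * (1 + v) ≠ 0 :=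
  norm_pos_iff.1 <| (div_nonneg (sub_nonneg.2 hρ) zero_le_two).trans_lt <|
    lt_norm_denom_of_mem_paramDisc hρ hv

theorem cartanParam_mem_ball {ρ r : ℝ} (hρ : ρ ≤ 1) {w v : ℂ} (hv : v ∈ paramDisc ρ)
    (hw : ‖w‖ < r * (1 - ρ) / 2) : cartanParam w v ∈ ball 0 r := by
  have hden := lt_norm_denom_of_mem_paramDisc hρ hv
  have hvρ : ‖v‖ < ρ := mem_ball_zero_iff.1 hv.1
  have hr : 0 < r := by nlinarith [norm_nonneg w]
  have hwr : ‖w‖ < r := by nlinarith [norm_nonneg w, norm_nonneg v]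
  rw [mem_ball_zero_iff, pi_norm_lt_iff hr]
  intro i
  fin_cases i
  · exact hwr
  · show ‖w * v‖ < r
    rw [norm_mul]
    nlinarith [norm_nonneg w, norm_nonneg v]
  · simp only [cartanParam, Fin.reduceFinMk, Matrix.cons_val, norm_div]
    rw [div_lt_iff₀ (by linarith)]
    nlinarith

theorem cartanParam_mem_of_germ {X U : Set (Fin 3 → ℂ)} {k : ℕ}
    {φ : Fin k → (Fin 3 → ℂ) → ℂ} (hφ : ∀ i, AnalyticOnNhd ℂ (φ i) U)
    (hX : X ∩ U = {x ∈ U | ∀ i, φ i x = 0}) {r : ℝ} (hU : ball 0 r ⊆ U)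
    (hR : cartanSet3C ∩ ball 0 r ⊆ X) {ρ : ℝ} (hρ : ρ ≤ 1) {w v : ℂ} (hv : v ∈ paramDisc ρ)
    (hw : ‖w‖ < r * (1 - ρ) / 2) : cartanParam w v ∈ X := by
  have h0S : ((0 : ℝ) : ℂ) ∈ ball (0 : ℂ) (r * (1 - ρ) / 2) := by
    simpa using (norm_nonneg w).trans_lt hw
  have h0T : ((0 : ℝ) : ℂ) ∈ paramDisc ρ :=
    ⟨by simpa using (norm_nonneg v).trans_lt (mem_ball_zero_iff.1 hv.1), by norm_num⟩
  have hball : ∀ w ∈ ball (0 : ℂ) (r * (1 - ρ) / 2), ∀ v ∈ paramDisc ρ,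
      cartanParam w v ∈ ball 0 r := fun w hw v hv ↦
    cartanParam_mem_ball hρ hv (mem_ball_zero_iff.1 hw)
  refine mem_of_forall_ofReal_mem hφ hX isOpen_ball (convex_ball _ _).isPreconnected
    (isOpen_paramDisc ρ) (convex_paramDisc ρ).isPreconnected h0S h0T
    (fun v _ w _ ↦ analyticAt_cartanParam_left v w)
    (fun w _ v hv ↦ analyticAt_cartanParam_right w (denom_ne_zero_of_mem_paramDisc hρ hv))
    (fun w hw v hv ↦ hU (hball w hw v hv)) (fun x u hx hu ↦ hR ⟨?_, hball _ hx _ hu⟩)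
    (mem_ball_zero_iff.2 hw) hv
  have hu' : -(1 / 2) < u := by simpa using hu.2.out
  exact cartanParam_ofReal_mem (by linarith)

section RealBranch

/-- With `s = (z₁ + z₂)/z₁`, the defining equation of `cartanSet3C` reads
`branchCubic s = z₁ / z₃`. -/
def branchCubic (s : ℂ) : ℂ := s * (s ^ 2 - 2 * s + 2)

theorem injOn_branchCubic : InjOn branchCubic (ball 0 (1 / 4)) := by
  intro a ha b hb hab
  rw [mem_ball_zero_iff] at ha hb
  have hfac : (a - b) * (2 - (2 * (a + b) - (a ^ 2 + a * b + b ^ 2))) = 0 := by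
    unfold branchCubic at hab
    linear_combination hab
  refine sub_eq_zero.1 ((mul_eq_zero.1 hfac).resolve_right fun h ↦ ?_)
  have hlin : ‖2 * (a + b)‖ ≤ 2 * (‖a‖ + ‖b‖) := by
    rw [norm_mul, Complex.norm_two]
    gcongr
    exact norm_add_le a b
  have hquad : ‖a ^ 2 + a * b + b ^ 2‖ ≤ ‖a‖ ^ 2 + ‖a‖ * ‖b‖ + ‖b‖ ^ 2 := by
    have := norm_add₃_le (a := a ^ 2) (b := a * b) (c := b ^ 2)
    rwa [norm_mul, norm_pow, norm_pow] at this
  have hsmall : ‖2 * (a + b) - (a ^ 2 + a * b + b ^ 2)‖ < 2 := by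
    refine (norm_sub_le _ _).trans_lt ?_
    nlinarith [norm_nonneg a, norm_nonneg b]
  rw [← sub_eq_zero.1 h] at hsmall
  norm_num at hsmall

theorem exists_branchCubic_inverse :
    ∃ σ : ℂ → ℂ, ∀ᶠ ζ in 𝓝 0,
      AnalyticAt ℂ σ ζ ∧ branchCubic (σ ζ) = ζ ∧ σ ζ ∈ ball 0 (1 / 4) := by
  have hderiv : deriv branchCubic 0 = 2 := by
    unfold branchCubic
    rw [deriv_fun_mul (by fun_prop) (by fun_prop)]
    simp
  have h := (show AnalyticAt ℂ branchCubic 0 by unfold branchCubic; fun_prop)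
    |>.exists_eventually_rightInverse (by rw [hderiv]; norm_num)
      (ball_mem_nhds (0 : ℂ) (by norm_num : (0 : ℝ) < 1 / 4))
  rwa [show branchCubic 0 = 0 by simp [branchCubic]] at h

theorem mul_branchCubic_of_cartan {x₁ x₂ x₃ s : ℝ} (h₁ : x₁ ≠ 0)
    (h : x₃ * (x₁ ^ 2 + x₂ ^ 2) * (x₁ + x₂) = x₁ ^ 4) (hs : x₁ + x₂ = s * x₁) :
    x₃ * (s * (s ^ 2 - 2 * s + 2)) = x₁ := by
  have hx₂ : x₂ = (s - 1) * x₁ := by linear_combination hs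
  subst hx₂
  refine mul_left_cancel₀ (pow_ne_zero 3 h₁) ?_
  linear_combination h

/-- For `σ` a local inverse of `branchCubic` at `0`, the zero set of this function is the branch
of the complexification of `cartanSet3C` that carries its real points near `(0, 0, t)`, `t > 0`. -/
def realBranchEq (σ : ℂ → ℂ) (z : Fin 3 → ℂ) : ℂ := z 0 + z 1 - z 0 * σ (z 0 / z 2)

variable {σ : ℂ → ℂ} {z : Fin 3 → ℂ}

theorem analyticAt_realBranchEq (h₂ : z 2 ≠ 0) (hσ : AnalyticAt ℂ σ (z 0 / z 2)) :
    AnalyticAt ℂ (realBranchEq σ) z := by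
  have hproj : ∀ j, AnalyticAt ℂ (fun z : Fin 3 → ℂ ↦ z j) z := fun j ↦
    (ContinuousLinearMap.proj (R := ℂ) (φ := fun _ : Fin 3 ↦ ℂ) j).analyticAt z
  exact ((hproj 0).add (hproj 1)).sub ((hproj 0).mul
    (AnalyticAt.comp (f := fun z : Fin 3 → ℂ ↦ z 0 / z 2) hσ ((hproj 0).div (hproj 2) h₂)))

theorem realBranchEq_eq_zero (hz : z ∈ cartanSet3C) (hz₀ : 4 * ‖z 0‖ < (z 2).re)
    (hσ : branchCubic (σ (z 0 / z 2)) = z 0 / z 2) (hσ' : σ (z 0 / z 2) ∈ ball 0 (1 / 4)) :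
    realBranchEq σ z = 0 := by
  obtain ⟨x, rfl⟩ : ∃ x : Fin 3 → ℝ, z = fun j ↦ (x j : ℂ) :=
    ⟨fun j ↦ (z j).re, funext fun j ↦ Complex.ext rfl (by simp [hz.1 j])⟩
  have heq : x 2 * (x 0 ^ 2 + x 1 ^ 2) * (x 0 + x 1) = x 0 ^ 4 := by simpa using hz.2
  simp only [norm_real, Real.norm_eq_abs, ofReal_re] at hz₀
  have h₃ : 0 < x 2 := (by positivity : (0 : ℝ) ≤ 4 * |x 0|).trans_lt hz₀
  simp only [← ofReal_div] at hσ hσ'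
  simp only [realBranchEq, ← ofReal_div]
  by_cases h₁ : x 0 = 0
  · have h₂ : x 1 = 0 := by
      rw [h₁] at heq
      have : x 2 * x 1 ^ 3 = 0 := by linear_combination heq
      simpa [h₃.ne'] using this
    simp [h₁, h₂]
  · set s := (x 0 + x 1) / x 0
    have hs : x 0 + x 1 = s * x 0 := (div_mul_cancel₀ _ h₁).symm
    have hcubic := mul_branchCubic_of_cartan h₁ heq hs
    have hs_small : |s| < 1 / 4 := by
      have : |s| * x 2 ≤ |x 0| := by
        rw [← hcubic, abs_mul, abs_mul, abs_of_pos h₃,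
          abs_of_pos (by nlinarith [sq_nonneg (s - 1)] : 0 < s ^ 2 - 2 * s + 2)]
        nlinarith [mul_nonneg (mul_nonneg h₃.le (abs_nonneg s)) (sq_nonneg (s - 1))]
      nlinarith
    have hσs : σ ((x 0 / x 2 : ℝ) : ℂ) = s := by
      refine injOn_branchCubic hσ' (by simpa using hs_small) ?_
      have hreal : s * (s ^ 2 - 2 * s + 2) = x 0 / x 2 := by
        rw [eq_div_iff h₃.ne', ← hcubic]
        ring
      rw [hσ]
      unfold branchCubic
      exact_mod_cast hreal.symm
    rw [hσs]
    exact_mod_cast (by linear_combination hs : x 0 + x 1 - x 0 * s = 0)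

theorem realBranchEq_ne_zero {v : ℂ} (h₀ : z 0 ≠ 0) (h₁ : z 1 = z 0 * v) (hv : v.re = 0)
    (hσ : ‖σ (z 0 / z 2)‖ < 1) : realBranchEq σ z ≠ 0 := by
  have hfac : realBranchEq σ z = z 0 * (1 + v - σ (z 0 / z 2)) := by
    rw [realBranchEq, h₁]
    ring
  rw [hfac]
  refine mul_ne_zero h₀ fun h ↦ ?_
  have hre := congrArg re h
  simp only [sub_re, add_re, one_re, hv, zero_re] at hre
  linarith [re_le_norm (σ (z 0 / z 2))]

theorem eventually_near_axis {P : ℂ → Prop} (hP : ∀ᶠ ζ in 𝓝 0, P ζ) {t : ℝ} (ht : 0 < t) :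
    ∀ᶠ z in 𝓝 (![0, 0, (t : ℂ)] : Fin 3 → ℂ), P (z 0 / z 2) ∧ 4 * ‖z 0‖ < (z 2).re := by
  have ht' : ((![0, 0, (t : ℂ)] : Fin 3 → ℂ) 2) ≠ 0 := by simp [ht.ne']
  have hdiv : ContinuousAt (fun z : Fin 3 → ℂ ↦ z 0 / z 2) ![0, 0, (t : ℂ)] := by
    fun_prop (disch := exact ht')
  refine (hdiv.tendsto.eventually ?_).and <|
    ContinuousAt.eventually_lt
      (continuous_const.mul (continuous_norm.comp (continuous_apply 0))).continuousAt
      (continuous_re.comp (continuous_apply 2)).continuousAt (by simpa using ht)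
  simpa using hP

theorem exists_analyticSubset_germ_near_axis {t : ℝ} (ht : 0 < t) :
    ∃ W Y : Set (Fin 3 → ℂ), IsOpen W ∧ ![0, 0, (t : ℂ)] ∈ W ∧ IsComplexAnalyticSubset W Y ∧
      GermLE cartanSet3C Y ![0, 0, (t : ℂ)] ∧
      ∀ z ∈ Y, ∀ v : ℂ, z 1 = z 0 * v → v.re = 0 → z 0 = 0 := by
  obtain ⟨σ, hσ⟩ := exists_branchCubic_inverse
  obtain ⟨W, hW, hWo, hqW⟩ := _root_.eventually_nhds_iff.1 (eventually_near_axis hσ ht)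
  refine ⟨W, {z ∈ W | realBranchEq σ z = 0}, hWo, hqW, ?_, ?_, ?_⟩
  · refine isComplexAnalyticSubset_zeroLocus hWo fun z hz ↦ analyticAt_realBranchEq ?_ (hW z hz).1.1
    exact fun h ↦ (by simpa [h] using (hW z hz).2 : 4 * ‖z 0‖ < 0).not_ge (by positivity)
  · refine ⟨W, hWo, hqW, fun z ⟨hzR, hzW⟩ ↦ ⟨hzW, ?_⟩⟩
    obtain ⟨⟨-, hcubic, hsmall⟩, hz₀⟩ := hW z hzW
    exact realBranchEq_eq_zero hzR hz₀ hcubic hsmall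
  · rintro z ⟨hzW, hzero⟩ v hv hvre
    by_contra h₀
    exact realBranchEq_ne_zero h₀ hv hvre
      ((mem_ball_zero_iff.1 (hW z hzW).1.2.2).trans (by norm_num)) hzero

end RealBranch

def complexBranchPoint (t s : ℝ) : Fin 3 → ℂ :=
  cartanParam (t * (1 - s ^ 2) * (1 + I * s)) (I * s)

theorem one_add_I_mul_ofReal_ne_zero (s : ℝ) : 1 + I * s ≠ 0 := fun h ↦ by
  simpa using congrArg re h

theorem one_sub_ofReal_sq_ne_zero {s : ℝ} (hs : s ^ 2 ≠ 1) : (1 : ℂ) - s ^ 2 ≠ 0 := by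
  exact_mod_cast sub_ne_zero.2 (Ne.symm hs)

theorem complexBranchPoint_zero_ne_zero {t s : ℝ} (ht : t ≠ 0) (hs : s ^ 2 ≠ 1) :
    complexBranchPoint t s 0 ≠ 0 :=
  mul_ne_zero (mul_ne_zero (ofReal_ne_zero.2 ht) (one_sub_ofReal_sq_ne_zero hs))
    (one_add_I_mul_ofReal_ne_zero s)

theorem complexBranchPoint_eq {t s : ℝ} (hs : s ^ 2 ≠ 1) :
    complexBranchPoint t s =
      ![t * (1 - s ^ 2) * (1 + I * s), t * (1 - s ^ 2) * (1 + I * s) * (I * s), (t : ℂ)] := by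
  ext1 j
  fin_cases j
  · rfl
  · rfl
  · simp only [complexBranchPoint, cartanParam, Fin.reduceFinMk, Matrix.cons_val]
    have hden : (1 + (I * s) ^ 2) * (1 + I * s) = (1 - s ^ 2) * (1 + I * s) := by
      rw [mul_pow, I_sq]
      ring
    rw [hden, mul_assoc, mul_div_cancel_right₀ _
      (mul_ne_zero (one_sub_ofReal_sq_ne_zero hs) (one_add_I_mul_ofReal_ne_zero s))]

theorem tendsto_complexBranchPoint (t : ℝ) :
    Tendsto (complexBranchPoint t) (𝓝[<] 1) (𝓝 ![0, 0, (t : ℂ)]) := by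
  have hcont : Continuous fun s : ℝ ↦ (![t * (1 - s ^ 2) * (1 + I * s),
      t * (1 - s ^ 2) * (1 + I * s) * (I * s), (t : ℂ)] : Fin 3 → ℂ) := by
    fun_prop
  have hlim := hcont.tendsto 1
  norm_num at hlim
  refine (hlim.mono_left nhdsWithin_le_nhds).congr' ?_
  filter_upwards [Ioo_mem_nhdsLT (zero_lt_one' ℝ)] with s hs
  exact (complexBranchPoint_eq (by nlinarith [hs.1, hs.2])).symm

theorem I_mul_mem_paramDisc {s : ℝ} (hs : s ∈ Ioo 0 1) : I * s ∈ paramDisc ((1 + s) / 2) :=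
  ⟨by simp [abs_of_pos hs.1]; linarith [hs.2], by simp⟩

theorem norm_complexBranchPoint_zero_lt {t r s : ℝ} (ht : 0 < t) (htr : 16 * t < r)
    (hs : s ∈ Ioo 0 1) : ‖(t : ℂ) * (1 - s ^ 2) * (1 + I * s)‖ < r * (1 - (1 + s) / 2) / 2 := by
  obtain ⟨hs₀, hs₁⟩ := hs
  have h1s' : 0 < 1 - s ^ 2 := by nlinarith
  have hI : ‖1 + I * s‖ ≤ 2 := by
    refine (norm_add_le _ _).trans ?_
    simp [abs_of_pos hs₀]
    linarith
  have h1s : ‖(1 : ℂ) - s ^ 2‖ = 1 - s ^ 2 := by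
    rw [← ofReal_one, ← ofReal_pow, ← ofReal_sub, norm_real, Real.norm_of_nonneg (by nlinarith)]
  rw [norm_mul, norm_mul, h1s, norm_real, Real.norm_of_nonneg ht.le]
  calc t * (1 - s ^ 2) * ‖1 + I * s‖ ≤ t * (1 - s ^ 2) * 2 := by gcongr
    _ < r * (1 - (1 + s) / 2) / 2 := by
      nlinarith [mul_pos (sub_pos.2 hs₁) (by nlinarith : 0 < r / 4 - 2 * t * (1 + s))]

/-- For the set `R = {x₃(x₁² + x₂²)(x₁ + x₂) = x₁⁴} ⊆ ℝ³ ⊆ ℂ³` there is no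
complex analytic set `X` defined on an open neighbourhood of `R` whose germ at every `p ∈ R`
is the smallest complex analytic germ containing `R_p`. -/
theorem statement15 :
    ¬ ∃ (U X : Set (Fin 3 → ℂ)), IsOpen U ∧ cartanSet3C ⊆ U ∧
      IsComplexAnalyticSubset U X ∧
      ∀ p ∈ cartanSet3C, IsSmallestComplexGermAt cartanSet3C p X := by
  rintro ⟨U, X, -, hRU, hX, hmin⟩
  have h0 : (0 : Fin 3 → ℂ) ∈ cartanSet3C := ⟨fun _ ↦ rfl, by simp⟩
  obtain ⟨U₀, hU₀, h0U₀, -, k, φ, hφ, hXU₀⟩ := hX.2 0 (hRU h0)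
  obtain ⟨V₀, hV₀, h0V₀, hRV₀⟩ := (hmin 0 h0).2.1
  obtain ⟨r, hr, hball⟩ := isOpen_iff.1 (hU₀.inter hV₀) 0 ⟨h0U₀, h0V₀⟩
  have hXc : ∀ {ρ : ℝ} {w v : ℂ}, ρ ≤ 1 → v ∈ paramDisc ρ → ‖w‖ < r * (1 - ρ) / 2 →
      cartanParam w v ∈ X := fun hρ hv hw ↦
    cartanParam_mem_of_germ hφ hXU₀ (fun z hz ↦ (hball hz).1)
      (fun z hz ↦ hRV₀ ⟨hz.1, (hball hz.2).2⟩) hρ hv hw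
  obtain ⟨t, ht, htr⟩ : ∃ t : ℝ, 0 < t ∧ 16 * t < r := ⟨r / 32, by positivity, by linarith⟩
  have hq : (![0, 0, (t : ℂ)] : Fin 3 → ℂ) ∈ cartanSet3C :=
    ⟨fun j ↦ by fin_cases j <;> simp, by simp⟩
  obtain ⟨W, Y, hWo, hqW, hY, hRY, hY_imag⟩ := exists_analyticSubset_germ_near_axis ht
  obtain ⟨V, hVo, hqV, hXY⟩ := (hmin _ hq).2.2 W Y hWo hqW hY hRY
  obtain ⟨s, hs, hsV⟩ := (Eventually.and (Ioo_mem_nhdsLT (zero_lt_one' ℝ))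
    (tendsto_complexBranchPoint t |>.eventually (hVo.mem_nhds hqV))).exists
  have hsX : complexBranchPoint t s ∈ X :=
    hXc (by linarith [hs.2]) (I_mul_mem_paramDisc hs) (norm_complexBranchPoint_zero_lt ht htr hs)
  exact complexBranchPoint_zero_ne_zero ht.ne' (by nlinarith [hs.1, hs.2])
    (hY_imag _ (hXY ⟨hsX, hsV⟩) _ rfl (by simp))
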